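/- Let t_1, t_2, γ be real with t_2 ≠ 0 and t_1 + γ/2 ≠ 0. Set β_1 = −t_2/(t_1 + γ/2) and β_2 = −(t_1 − γ/2)/t_2, and assume |β_1| ≠ |β_2|, i.e. t_2² ≠ |t_1² − γ²/4|. Let r be real with min(|β_1|, |β_2|) < r < max(|β_1|, |β_2|), and define the 2×2 complex matrix M by M_{ab} = (1/(2πi)) ∮_{|β|=r} [ (H(β))^{−1} ]_{ab} · dβ/β, the contour being the counterclockwise circle of radius r centered at the origin. Then det M = 0 if and only if |t_1² − γ²/4| < t_2². Hence E = 0 is an isolated edge mode of the non-reciprocal SSH model exactly in the topological regime |t_1² − γ²/4| < t_2². -/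

import Mathlib

open Real Complex Matrix

/-- The Bloch matrix of the non-reciprocal SSH model:
`H(β) = [[0, t₁ + γ/2 + t₂ β⁻¹], [t₁ − γ/2 + t₂ β, 0]]`. -/
noncomputable def nhSSH (t₁ t₂ γ : ℝ) (β : ℂ) : Matrix (Fin 2) (Fin 2) ℂ :=
  !![0, (t₁ : ℂ) + (γ : ℂ) / 2 + (t₂ : ℂ) * β⁻¹;
     (t₁ : ℂ) - (γ : ℂ) / 2 + (t₂ : ℂ) * β, 0]

/-!
On the circle `|β| = r` the matrix `H(β)` is antidiagonal and invertible, so `H(β)⁻¹` is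
antidiagonal with entries `1/(t₁ − γ/2 + t₂β)` and `1/(t₁ + γ/2 + t₂/β)`, and
`det M = −M₀₁ M₁₀`. By the residue theorem `M₁₀ = 1/(t₁ + γ/2)` if the pole `β₁` lies inside the
circle and `0` otherwise, while `M₀₁ = 1/(t₁ − γ/2)` if `β₂` lies outside and `0` otherwise (the
residues at `0` and `β₂` then cancel). So `det M = 0` unless `|β₁| < r < |β₂|`, and
`|β₂| < |β₁|` is the inequality `|t₁² − γ²/4| < t₂²`.
-/

open Metric

theorem circleIntegral_sub_inv_of_lt_norm {w : ℂ} {r : ℝ} (hr : 0 ≤ r) (hw : r < ‖w‖) :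
    ∮ z in C(0, r), (z - w)⁻¹ = 0 := by
  refine DiffContOnCl.circleIntegral_eq_zero hr ?_
  refine ((differentiableOn_id.sub_const w).inv fun z hz => sub_ne_zero.2 hz).diffContOnCl_ball
    (U := {w}ᶜ) fun z hz hzw => ?_
  rw [mem_closedBall_zero_iff, hzw] at hz
  exact hw.not_ge hz

theorem two_pi_I_inv_mul_circleIntegral_sub_inv {w : ℂ} {r : ℝ} (hr : 0 ≤ r) (hw : ‖w‖ ≠ r) :
    (2 * π * I)⁻¹ * ∮ z in C(0, r), (z - w)⁻¹ = if ‖w‖ < r then 1 else 0 := by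
  split_ifs with h
  · rw [circleIntegral.integral_sub_inv_of_mem_ball (mem_ball_zero_iff.2 h)]
    exact inv_mul_cancel₀ (by simp [pi_ne_zero])
  · rw [circleIntegral_sub_inv_of_lt_norm hr (lt_of_le_of_ne (not_lt.1 h) hw.symm), mul_zero]

theorem circleIntegrable_sub_inv_of_norm_ne {w : ℂ} {r : ℝ} (hr : 0 ≤ r) (hw : ‖w‖ ≠ r) :
    CircleIntegrable (fun z => (z - w)⁻¹) 0 r := by
  simp [_root_.abs_of_nonneg hr, hw]

theorem two_pi_I_inv_mul_circleIntegral_inv_add_mul_inv_mul_inv {a b : ℂ} {r : ℝ} (ha : a ≠ 0)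
    (hr : 0 < r) (hpole : ‖-b / a‖ ≠ r) :
    (2 * π * I)⁻¹ * ∮ z in C(0, r), (a + b * z⁻¹)⁻¹ * z⁻¹ =
      if ‖-b / a‖ < r then a⁻¹ else 0 := by
  have hfrac : Set.EqOn (fun z => (a + b * z⁻¹)⁻¹ * z⁻¹) (fun z => a⁻¹ * (z - -b / a)⁻¹)
      (sphere 0 r) := by
    intro z hz
    have hz0 : z ≠ 0 := ne_zero_of_mem_sphere hr.ne' ⟨z, hz⟩
    simp only [← mul_inv]
    congr 1
    field_simp
    ring
  rw [circleIntegral.integral_congr hr.le hfrac, circleIntegral.integral_const_mul, mul_left_comm,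
    two_pi_I_inv_mul_circleIntegral_sub_inv hr.le hpole]
  split_ifs <;> simp

theorem two_pi_I_inv_mul_circleIntegral_inv_add_mul_mul_inv {a b : ℂ} {r : ℝ} (hb : b ≠ 0)
    (hr : 0 < r) (hpole : ‖-a / b‖ ≠ r) :
    (2 * π * I)⁻¹ * ∮ z in C(0, r), (a + b * z)⁻¹ * z⁻¹ =
      if ‖-a / b‖ < r then 0 else a⁻¹ := by
  rcases eq_or_ne a 0 with rfl | ha
  · -- both branches of the right-hand side are `0`, since `0⁻¹ = 0`
    have hsq : (fun z : ℂ => (0 + b * z)⁻¹ * z⁻¹) = fun z => b⁻¹ * (z - 0) ^ (-2 : ℤ) := by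
      ext z
      rw [zero_add, sub_zero, _root_.zpow_neg, zpow_two, mul_inv, mul_inv, mul_assoc]
    rw [hsq, circleIntegral.integral_const_mul,
      circleIntegral.integral_sub_zpow_of_ne (by decide), mul_zero, mul_zero, _root_.inv_zero,
      ite_self]
  have hfrac : Set.EqOn (fun z => (a + b * z)⁻¹ * z⁻¹)
      (fun z => a⁻¹ * ((z - 0)⁻¹ - (z - -a / b)⁻¹)) (sphere 0 r) := by
    intro z hz
    have hz0 : z ≠ 0 := ne_zero_of_mem_sphere hr.ne' ⟨z, hz⟩
    have hz_ne_pole : z ≠ -a / b := fun h => hpole (h ▸ mem_sphere_zero_iff_norm.1 hz)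
    have hlin : a + b * z ≠ 0 := fun h => hz_ne_pole (by rw [eq_div_iff hb]; linear_combination h)
    have hpole_eq : z - -a / b = (a + b * z) / b := by field_simp; ring
    simp only [sub_zero, hpole_eq]
    field_simp
    ring
  rw [circleIntegral.integral_congr hr.le hfrac, circleIntegral.integral_const_mul,
    circleIntegral.integral_sub (circleIntegrable_sub_inv_of_norm_ne hr.le (by simpa using hr.ne))
      (circleIntegrable_sub_inv_of_norm_ne hr.le hpole), mul_left_comm, mul_sub,
    two_pi_I_inv_mul_circleIntegral_sub_inv hr.le (by simpa using hr.ne),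
    two_pi_I_inv_mul_circleIntegral_sub_inv hr.le hpole]
  split_ifs <;> simp_all

theorem Matrix.inv_antidiagonal_fin_two {K : Type*} [Field K] {p q : K} (hp : p ≠ 0)
    (hq : q ≠ 0) : (!![0, p; q, 0])⁻¹ = !![0, q⁻¹; p⁻¹, 0] :=
  inv_eq_right_inv (by simp [hp, hq, one_fin_two])

/-- The edge matrix `M_edge(E = 0)` of a Bloch matrix `H`, for the circle `|β| = r`. -/
noncomputable def edgeMatrix {n : Type*} [Fintype n] [DecidableEq n]
    (H : ℂ → Matrix n n ℂ) (r : ℝ) : Matrix n n ℂ :=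
  Matrix.of fun a b => (2 * (π : ℂ) * I)⁻¹ * ∮ β in C(0, r), (H β)⁻¹ a b * β⁻¹

section nhSSH

variable {t₁ t₂ γ : ℝ} {β₁ β₂ : ℂ}

theorem nhSSH_inv (ht₂ : t₂ ≠ 0) (hA : (t₁ : ℂ) + (γ : ℂ) / 2 ≠ 0)
    (hβ₁ : β₁ = -(t₂ : ℂ) / ((t₁ : ℂ) + (γ : ℂ) / 2))
    (hβ₂ : β₂ = -((t₁ : ℂ) - (γ : ℂ) / 2) / (t₂ : ℂ)) {β : ℂ} (hβ0 : β ≠ 0) (hβ₁β : β ≠ β₁)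
    (hβ₂β : β ≠ β₂) :
    (nhSSH t₁ t₂ γ β)⁻¹ =
      !![0, ((t₁ : ℂ) - (γ : ℂ) / 2 + (t₂ : ℂ) * β)⁻¹;
         ((t₁ : ℂ) + (γ : ℂ) / 2 + (t₂ : ℂ) * β⁻¹)⁻¹, 0] := by
  have ht₂' : (t₂ : ℂ) ≠ 0 := ofReal_ne_zero.2 ht₂
  refine Matrix.inv_antidiagonal_fin_two (fun h => hβ₁β ?_) (fun h => hβ₂β ?_)
  · rw [hβ₁, eq_div_iff hA]
    linear_combination β * h - (t₂ : ℂ) * mul_inv_cancel₀ hβ0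
  · rw [hβ₂, eq_div_iff ht₂']
    linear_combination h

theorem edgeMatrix_nhSSH (ht₂ : t₂ ≠ 0) (hA : (t₁ : ℂ) + (γ : ℂ) / 2 ≠ 0)
    (hβ₁ : β₁ = -(t₂ : ℂ) / ((t₁ : ℂ) + (γ : ℂ) / 2))
    (hβ₂ : β₂ = -((t₁ : ℂ) - (γ : ℂ) / 2) / (t₂ : ℂ)) {r : ℝ} (hr : 0 < r) (hβ₁r : ‖β₁‖ ≠ r)
    (hβ₂r : ‖β₂‖ ≠ r) :
    edgeMatrix (nhSSH t₁ t₂ γ) r =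
      !![0, if ‖β₂‖ < r then 0 else ((t₁ : ℂ) - (γ : ℂ) / 2)⁻¹;
         if ‖β₁‖ < r then ((t₁ : ℂ) + (γ : ℂ) / 2)⁻¹ else 0, 0] := by
  have hinv : ∀ β ∈ sphere (0 : ℂ) r, (nhSSH t₁ t₂ γ β)⁻¹ =
      !![0, ((t₁ : ℂ) - (γ : ℂ) / 2 + (t₂ : ℂ) * β)⁻¹;
         ((t₁ : ℂ) + (γ : ℂ) / 2 + (t₂ : ℂ) * β⁻¹)⁻¹, 0] := fun β hβ => by
    rw [mem_sphere_zero_iff_norm] at hβ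
    exact nhSSH_inv ht₂ hA hβ₁ hβ₂ (norm_pos_iff.1 (hβ ▸ hr))
      (fun h => hβ₁r (h ▸ hβ)) (fun h => hβ₂r (h ▸ hβ))
  ext a b
  rw [edgeMatrix, of_apply, circleIntegral.integral_congr hr.le fun β hβ =>
    congrArg (fun M : Matrix (Fin 2) (Fin 2) ℂ => M a b * β⁻¹) (hinv β hβ)]
  subst hβ₁ hβ₂
  fin_cases a <;> fin_cases b
  · simp [circleIntegral]
  · simpa using two_pi_I_inv_mul_circleIntegral_inv_add_mul_mul_inv (ofReal_ne_zero.2 ht₂) hr hβ₂r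
  · simpa using two_pi_I_inv_mul_circleIntegral_inv_add_mul_inv_mul_inv hA hr hβ₁r
  · simp [circleIntegral]

theorem nhSSH_roots_norm_lt_iff (hβ₁ : β₁ = -(t₂ : ℂ) / ((t₁ : ℂ) + (γ : ℂ) / 2))
    (hβ₂ : β₂ = -((t₁ : ℂ) - (γ : ℂ) / 2) / (t₂ : ℂ)) (ht₂ : t₂ ≠ 0) (hγ : t₁ + γ / 2 ≠ 0) :
    ‖β₂‖ < ‖β₁‖ ↔ |t₁ ^ 2 - γ ^ 2 / 4| < t₂ ^ 2 := by
  have hβ₁_norm : ‖β₁‖ = |t₂| / |t₁ + γ / 2| := by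
    rw [hβ₁, show -(t₂ : ℂ) / ((t₁ : ℂ) + (γ : ℂ) / 2) = ((-t₂ / (t₁ + γ / 2) : ℝ) : ℂ) by
      push_cast; rfl, norm_real, norm_eq_abs, abs_div, abs_neg]
  have hβ₂_norm : ‖β₂‖ = |t₁ - γ / 2| / |t₂| := by
    rw [hβ₂, show -((t₁ : ℂ) - (γ : ℂ) / 2) / (t₂ : ℂ) = ((-(t₁ - γ / 2) / t₂ : ℝ) : ℂ) by
      push_cast; rfl, norm_real, norm_eq_abs, abs_div, abs_neg]
  rw [hβ₁_norm, hβ₂_norm, div_lt_div_iff₀ (abs_pos.2 ht₂) (abs_pos.2 hγ), ← abs_mul,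
    abs_mul_abs_self, ← sq]
  ring_nf

end nhSSH

theorem nhSSH_zero_edge_mode_general (t₁ t₂ γ : ℝ)
    (ht₂ : t₂ ≠ 0) (hγ : t₁ + γ / 2 ≠ 0)
    (β₁ β₂ : ℂ)
    (hβ₁ : β₁ = -(t₂ : ℂ) / ((t₁ : ℂ) + (γ : ℂ) / 2))
    (hβ₂ : β₂ = -((t₁ : ℂ) - (γ : ℂ) / 2) / (t₂ : ℂ))
    (r : ℝ) (hr₁ : min (‖β₁‖) (‖β₂‖) < r)
    (hr₂ : r < max (‖β₁‖) (‖β₂‖)) :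
    (Matrix.of fun a b : Fin 2 =>
        (2 * (π : ℂ) * Complex.I)⁻¹ *
          ∮ β in C(0, r), ((nhSSH t₁ t₂ γ β)⁻¹ a b) * β⁻¹).det = 0 ↔
      |t₁ ^ 2 - γ ^ 2 / 4| < t₂ ^ 2 := by
  have hA : (t₁ : ℂ) + (γ : ℂ) / 2 ≠ 0 := by exact_mod_cast hγ
  have hr : 0 < r := (le_min (norm_nonneg _) (norm_nonneg _)).trans_lt hr₁
  change (edgeMatrix (nhSSH t₁ t₂ γ) r).det = 0 ↔ _
  rw [← nhSSH_roots_norm_lt_iff hβ₁ hβ₂ ht₂ hγ]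
  rcases lt_or_ge ‖β₂‖ ‖β₁‖ with h | h
  · rw [min_eq_right h.le] at hr₁
    rw [max_eq_left h.le] at hr₂
    rw [edgeMatrix_nhSSH ht₂ hA hβ₁ hβ₂ hr hr₂.ne' hr₁.ne, det_fin_two_of, if_pos hr₁]
    simp [h]
  · rw [min_eq_left h] at hr₁
    rw [max_eq_right h] at hr₂
    have hB : (t₁ : ℂ) - (γ : ℂ) / 2 ≠ 0 := fun hB => by
      rw [hβ₂, hB, neg_zero, zero_div, norm_zero] at hr₂
      exact hr.not_gt hr₂
    rw [edgeMatrix_nhSSH ht₂ hA hβ₁ hβ₂ hr hr₁.ne hr₂.ne', det_fin_two_of, if_pos hr₁,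
      if_neg hr₂.not_gt]
    simp [hA, hB, h.not_gt]

/-- Zero edge mode of the non-reciprocal SSH model: with
`β₁ = −t₂/(t₁+γ/2)`, `β₂ = −(t₁−γ/2)/t₂` the `β`-solutions at `E = 0`, and
`min(|β₁|,|β₂|) < r < max(|β₁|,|β₂|)`, the edge matrix
`M_{ab} = (1/(2πi)) ∮_{|β|=r} [H(β)⁻¹]_{ab} dβ/β` satisfies `det M = 0` if and only if
`|t₁² − γ²/4| < t₂²`, i.e. exactly in the topological regime. -/
theorem nhSSH_zero_edge_mode (t₁ t₂ γ : ℝ)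
    (ht₂ : t₂ ≠ 0) (hγ : t₁ + γ / 2 ≠ 0)
    (β₁ β₂ : ℂ)
    (hβ₁ : β₁ = -(t₂ : ℂ) / ((t₁ : ℂ) + (γ : ℂ) / 2))
    (hβ₂ : β₂ = -((t₁ : ℂ) - (γ : ℂ) / 2) / (t₂ : ℂ))
    (hne : ‖β₁‖ ≠ ‖β₂‖)
    (r : ℝ) (hr₁ : min (‖β₁‖) (‖β₂‖) < r)
    (hr₂ : r < max (‖β₁‖) (‖β₂‖)) :
    (Matrix.of fun a b : Fin 2 =>
        (2 * (π : ℂ) * Complex.I)⁻¹ *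
          ∮ β in C(0, r), ((nhSSH t₁ t₂ γ β)⁻¹ a b) * β⁻¹).det = 0 ↔
      |t₁ ^ 2 - γ ^ 2 / 4| < t₂ ^ 2 :=
  nhSSH_zero_edge_mode_general t₁ t₂ γ ht₂ hγ β₁ β₂ hβ₁ hβ₂ r hr₁ hr₂
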